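/- arXiv:0712.2590 — 2 statements merged into one kernel-verified Lean document; each statement's English description precedes it below -/
import Mathlib

section
/- For every integer k, the number of spanning trees T' of G^n with v(T') = k equals the number of spanning trees T of G with e ∈ T and v(T) = k − n, plus (n+1) times the number of spanning trees T of G with e ∉ T and v(T) = k − n. -/
/-!
A spanning tree `T'` of `G^n` consists of its restriction `R` to the old vertices together with
some of the `n + 1` path edges. If all path edges are present, contracting the path turns `T'`
into the spanning tree `R + e` of `G`. Otherwise some path edge `e_j` is missing; collapsing the
new vertices before the gap to `u` and those after it to `v` shows that `R` is connected, and it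
is acyclic as a subgraph of `T'`, so `R` is a spanning tree of `G` avoiding `e`; counting edges
then shows that `e_j` is the only missing path edge. Conversely a tree `T ∋ e` lifts to the single
tree `T^n`, and a tree `T ∌ e` lifts to the `n + 1` trees `T^n - e_j`. Path edges and `e` are
positive, so every lift has exactly `n` more positive edges than `T`.
-/

open Sum

/-- The set of spanning trees of a simple graph `H`: subgraphs (on the full
vertex set) that are trees. -/
def spanningTrees {X : Type*} (H : SimpleGraph X) : Set (SimpleGraph X) :=
  {T | T ≤ H ∧ T.IsTree}

/-- The number of positive edges of `T` with respect to the sign function `σ`. -/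
noncomputable def posCount {X : Type*} (σ : Sym2 X → ℤ) (T : SimpleGraph X) : ℕ :=
  {ed | ed ∈ T.edgeSet ∧ σ ed = 1}.ncard

/-- The graph `G^n`: delete the edge `{u, v}` and insert a path
`u — w₁ — ⋯ — wₙ — v` through `n` new vertices. -/
def subdiv {V : Type*} (G : SimpleGraph V) (u v : V) (n : ℕ) :
    SimpleGraph (V ⊕ Fin n) :=
  SimpleGraph.fromRel fun a b =>
    match a, b with
    | inl a, inl b => G.Adj a b ∧ s(a, b) ≠ s(u, v)
    | inl a, inr i => (a = u ∧ (i : ℕ) = 0) ∨ (a = v ∧ (i : ℕ) = n - 1)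
    | inr i, inr j => (j : ℕ) = (i : ℕ) + 1
    | inr _, inl _ => False

/-- The sign function on `G^n`: old edges keep their signs, and all
new (path) edges are positive. -/
noncomputable def subdivSign {V : Type*} {n : ℕ} (σ : Sym2 V → ℤ) :
    Sym2 (V ⊕ Fin n) → ℤ :=
  Sym2.lift ⟨fun a b =>
    match a, b with
    | inl a, inl b => σ s(a, b)
    | _, _ => (1 : ℤ),
    by rintro (a | i) (b | j) <;> simp only [] <;> rw [Sym2.eq_swap]⟩

open SimpleGraph

namespace SimpleGraph

variable {W W' : Type*} {H : SimpleGraph W} {K : SimpleGraph W'}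

theorem mem_edgeSet_comap (f : W → W') (d : Sym2 W) :
    d ∈ (K.comap f).edgeSet ↔ Sym2.map f d ∈ K.edgeSet := by
  induction d with
  | _ a b => rfl

theorem Reachable.lift (f : W → W') (hf : ∀ a b, H.Adj a b → K.Reachable (f a) (f b))
    {a b : W} (h : H.Reachable a b) : K.Reachable (f a) (f b) := by
  obtain ⟨p⟩ := h
  induction p with
  | nil => rfl
  | cons hadj _ ih => exact (hf _ _ hadj).trans ih

theorem Connected.lift (hH : H.Connected) (f : W → W')
    (hf : ∀ a b, H.Adj a b → K.Reachable (f a) (f b))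
    (hsurj : ∀ y, ∃ x, K.Reachable (f x) y) : K.Connected := by
  obtain ⟨x₀⟩ := hH.nonempty
  refine (connected_iff_exists_forall_reachable _).2 ⟨f x₀, fun y => ?_⟩
  obtain ⟨x, hx⟩ := hsurj y
  exact ((hH.preconnected x₀ x).lift f hf).trans hx

theorem isTree_iff_connected_and_ncard [Finite W] :
    H.IsTree ↔ H.Connected ∧ H.edgeSet.ncard + 1 = Nat.card W := by
  rw [isTree_iff_connected_and_card, Nat.card_coe_set_eq]

end SimpleGraph

section posCount

variable {X : Type*}

theorem posCount_const_one (T : SimpleGraph X) : posCount (fun _ => 1) T = T.edgeSet.ncard := by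
  simp [posCount]

theorem posCount_deleteEdges_add_one [Finite X] {σ : Sym2 X → ℤ} {T : SimpleGraph X} {e : Sym2 X}
    (he : e ∈ T.edgeSet) (hσ : σ e = 1) :
    posCount σ (T.deleteEdges {e}) + 1 = posCount σ T := by
  have : {x | x ∈ (T.deleteEdges {e}).edgeSet ∧ σ x = 1} = {x | x ∈ T.edgeSet ∧ σ x = 1} \ {e} := by
    ext x
    simp only [edgeSet_deleteEdges, Set.mem_sdiff, Set.mem_ofPred_eq, Set.mem_singleton_iff]
    tauto
  rw [posCount, posCount, this]
  exact Set.ncard_sdiff_singleton_add_one ⟨he, hσ⟩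

end posCount

section Path

variable {V : Type*} {u v : V} {n : ℕ}

/-- `pathVert u v n m` is `w_m`, where `w_0 = u`, `w_i = inr (i - 1)` for `1 ≤ i ≤ n` and
`w_{n+1} = v`; all indices beyond `n + 1` also give `v`. -/
def pathVert (u v : V) (n m : ℕ) : V ⊕ Fin n :=
  if h₀ : m = 0 then inl u else if h : m ≤ n then inr ⟨m - 1, by omega⟩ else inl v

/-- The path edge `e_j = w_j w_{j+1}` of `G^n`. -/
def pathEdge (u v : V) (n j : ℕ) : Sym2 (V ⊕ Fin n) :=
  s(pathVert u v n j, pathVert u v n (j + 1))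

@[simp] theorem pathVert_zero : pathVert u v n 0 = inl u := rfl

theorem pathVert_succ {m : ℕ} (h : m < n) : pathVert u v n (m + 1) = inr ⟨m, h⟩ := by
  simp [pathVert, show m + 1 ≤ n by omega]

theorem pathVert_of_lt {m : ℕ} (h : n < m) : pathVert u v n m = inl v := by
  simp [pathVert, show m ≠ 0 by omega, show ¬m ≤ n by omega]

theorem pathVert_injOn (huv : u ≠ v) : Set.InjOn (pathVert u v n) (Set.Iic (n + 1)) := by
  intro m hm m' hm' h
  simp only [Set.mem_Iic] at hm hm'
  unfold pathVert at h
  split_ifs at h <;> simp_all [Fin.ext_iff, eq_comm] <;> omega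

theorem pathEdge_injOn (huv : u ≠ v) : Set.InjOn (pathEdge u v n) (Set.Iic n) := by
  intro j hj j' hj' h
  simp only [Set.mem_Iic] at hj hj'
  have hinj := pathVert_injOn (n := n) huv
  rcases Sym2.eq_iff.1 h with ⟨h₁, -⟩ | ⟨h₁, h₂⟩
  · exact hinj (by simp; omega) (by simp; omega) h₁
  · have := hinj (by simp; omega) (by simp; omega) h₁
    have := hinj (by simp; omega) (by simp; omega) h₂
    omega

theorem exists_inr_mem_pathEdge (hn : 1 ≤ n) {j : ℕ} (hj : j ≤ n) :
    ∃ i, inr i ∈ pathEdge u v n j := by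
  rcases j with _ | j
  · exact ⟨⟨0, hn⟩, by simp [pathEdge, pathVert_succ hn]⟩
  · exact ⟨⟨j, hj⟩, by simp [pathEdge, pathVert_succ hj]⟩

theorem map_inl_ne_pathEdge (hn : 1 ≤ n) {j : ℕ} (hj : j ≤ n) (d : Sym2 V) :
    Sym2.map inl d ≠ pathEdge u v n j := by
  rintro h
  obtain ⟨i, hi⟩ := exists_inr_mem_pathEdge (u := u) (v := v) hn hj
  rw [← h, Sym2.mem_map] at hi
  obtain ⟨_, -, hi⟩ := hi
  exact inl_ne_inr hi

theorem reachable_pathVert {H : SimpleGraph (V ⊕ Fin n)} {m₁ m₂ : ℕ} (h : m₁ ≤ m₂)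
    (hpath : ∀ m, m₁ ≤ m → m < m₂ → pathEdge u v n m ∈ H.edgeSet) :
    H.Reachable (pathVert u v n m₁) (pathVert u v n m₂) := by
  induction m₂, h using Nat.le_induction with
  | base => rfl
  | succ m₂ h ih =>
    exact (ih fun m h₁ h₂ => hpath m h₁ (by omega)).trans (hpath m₂ h (by omega)).reachable

end Path

section Subdivision

variable {V : Type*} {u v : V} {n : ℕ} {G T : SimpleGraph V}

@[simp] theorem subdiv_adj_inl {a b : V} :
    (subdiv G u v n).Adj (inl a) (inl b) ↔ G.Adj a b ∧ s(a, b) ≠ s(u, v) := by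
  simp only [subdiv, fromRel_adj, ne_eq, inl.injEq, Sym2.eq_swap (a := b)]
  grind [G.adj_comm, Adj.ne]

theorem comap_inl_subdiv : (subdiv G u v n).comap inl = G.deleteEdges {s(u, v)} := by
  ext a b
  simp

theorem comap_inl_le_of_le_subdiv {H : SimpleGraph (V ⊕ Fin n)} (hH : H ≤ subdiv G u v n) :
    H.comap inl ≤ G.deleteEdges {s(u, v)} :=
  comap_inl_subdiv (G := G) ▸ fun _ _ h => hH h

theorem subdiv_mono (h : T ≤ G) : subdiv T u v n ≤ subdiv G u v n := by
  intro x y hxy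
  rw [subdiv, fromRel_adj] at hxy ⊢
  rcases x with a | i <;> rcases y with b | j <;>
    first | exact hxy | exact ⟨hxy.1, hxy.2.imp (.imp_left (h ·)) (.imp_left (h ·))⟩

theorem pathEdge_mem_edgeSet_subdiv (hn : 1 ≤ n) {j : ℕ} (hj : j ≤ n) :
    pathEdge u v n j ∈ (subdiv G u v n).edgeSet := by
  rw [pathEdge, mem_edgeSet, subdiv, fromRel_adj]
  rcases j with _ | m
  · simp [pathVert_succ hn]
  rw [pathVert_succ hj]
  rcases (show m + 1 < n ∨ m + 1 = n by omega) with h | h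
  · simp [pathVert_succ h]
  · simp [pathVert_of_lt (show n < m + 1 + 1 by omega)]
    omega

theorem subdiv_adj_cases (hn : 1 ≤ n) {x y : V ⊕ Fin n} (h : (subdiv G u v n).Adj x y) :
    (∃ a b, x = inl a ∧ y = inl b) ∨ ∃ j ≤ n, s(x, y) = pathEdge u v n j := by
  have mixed : ∀ a (i : Fin n), (a = u ∧ (i : ℕ) = 0) ∨ (a = v ∧ (i : ℕ) = n - 1) →
      ∃ j ≤ n, s(inl a, inr i) = pathEdge u v n j := by
    rintro a i (⟨rfl, hi⟩ | ⟨rfl, hi⟩)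
    · exact ⟨0, by omega, by simp [pathEdge, pathVert_succ hn, Fin.ext_iff, hi]⟩
    · refine ⟨n, le_rfl, ?_⟩
      obtain ⟨m, rfl⟩ : ∃ m, n = m + 1 := ⟨n - 1, by omega⟩
      simp [pathEdge, pathVert_succ (Nat.lt_succ_self m), pathVert_of_lt (Nat.lt_succ_self _),
        Fin.ext_iff, hi, Sym2.eq_swap]
  rw [subdiv, fromRel_adj] at h
  rcases x with a | i <;> rcases y with b | j <;> simp only [or_false, false_or] at h
  · exact .inl ⟨a, b, rfl, rfl⟩
  · exact .inr (mixed a j h.2)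
  · exact .inr (by simpa [Sym2.eq_swap] using mixed b i h.2)
  · obtain ⟨i, hi⟩ := i
    obtain ⟨j, hj⟩ := j
    rcases h.2 with rfl | rfl
    · exact .inr ⟨i + 1, hi, by simp [pathEdge, pathVert_succ hi, pathVert_succ hj]⟩
    · exact .inr ⟨j + 1, hj, by simp [pathEdge, pathVert_succ hi, pathVert_succ hj, Sym2.eq_swap]⟩

end Subdivision

section Decomposition

variable {V : Type*} {u v : V} {n : ℕ} {G : SimpleGraph V}

theorem subdivSign_map_inl (σ : Sym2 V → ℤ) (d : Sym2 V) :
    subdivSign (n := n) σ (Sym2.map inl d) = σ d := by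
  induction d with
  | _ a b => rfl

theorem subdivSign_pathEdge (σ : Sym2 V → ℤ) (hn : 1 ≤ n) {j : ℕ} (hj : j ≤ n) :
    subdivSign σ (pathEdge u v n j) = 1 := by
  obtain ⟨i, hi⟩ := exists_inr_mem_pathEdge (u := u) (v := v) hn hj
  obtain ⟨y, hy⟩ := Sym2.mem_iff_exists.1 hi
  rw [hy]
  rcases y with _ | _ <;> rfl

theorem subdivSign_const_one : subdivSign (n := n) (fun _ : Sym2 V => 1) = fun _ => 1 := by
  ext x
  induction x with
  | _ a b => rcases a with _ | _ <;> rcases b with _ | _ <;> rfl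

def pathIndices (u v : V) (n : ℕ) (H : SimpleGraph (V ⊕ Fin n)) : Set ℕ :=
  {j | j ≤ n ∧ pathEdge u v n j ∈ H.edgeSet}

variable {H : SimpleGraph (V ⊕ Fin n)}

theorem edgeSet_eq_of_le_subdiv (hn : 1 ≤ n) (hH : H ≤ subdiv G u v n) :
    H.edgeSet = Sym2.map inl '' (H.comap inl).edgeSet ∪ pathEdge u v n '' pathIndices u v n H := by
  ext x
  refine ⟨fun hx => ?_, ?_⟩
  · induction x with
    | _ x y =>
      rcases subdiv_adj_cases hn (hH hx) with ⟨a, b, rfl, rfl⟩ | ⟨j, hj, hxy⟩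
      · exact .inl ⟨s(a, b), hx, rfl⟩
      · exact .inr ⟨j, ⟨hj, hxy ▸ hx⟩, hxy.symm⟩
  · rintro (⟨d, hd, rfl⟩ | ⟨j, hj, rfl⟩)
    · exact (mem_edgeSet_comap _ _).1 hd
    · exact hj.2

theorem eq_of_le_subdiv (hn : 1 ≤ n) {G₁ G₂ : SimpleGraph V} {H₁ H₂ : SimpleGraph (V ⊕ Fin n)}
    (h₁ : H₁ ≤ subdiv G₁ u v n) (h₂ : H₂ ≤ subdiv G₂ u v n)
    (hcomap : H₁.comap inl = H₂.comap inl)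
    (hpath : pathIndices u v n H₁ = pathIndices u v n H₂) : H₁ = H₂ := by
  rw [← edgeSet_inj, edgeSet_eq_of_le_subdiv hn h₁, edgeSet_eq_of_le_subdiv hn h₂, hcomap, hpath]

variable [Finite V]

theorem ncard_image_inl_union_image_pathEdge (hn : 1 ≤ n) (huv : u ≠ v) (E : Set (Sym2 V))
    {J : Set ℕ} (hJ : J ⊆ Set.Iic n) :
    (Sym2.map inl '' E ∪ pathEdge u v n '' J).ncard = E.ncard + J.ncard := by
  rw [Set.ncard_union_eq, Set.ncard_image_of_injective _ (Sym2.map.injective inl_injective),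
    ((pathEdge_injOn huv).mono hJ).ncard_image]
  rw [Set.disjoint_left]
  rintro _ ⟨d, -, rfl⟩ ⟨j, hj, h⟩
  exact map_inl_ne_pathEdge hn (hJ hj) d h.symm

theorem posCount_of_le_subdiv (hn : 1 ≤ n) (huv : u ≠ v) (σ : Sym2 V → ℤ)
    (hH : H ≤ subdiv G u v n) :
    posCount (subdivSign σ) H = posCount σ (H.comap inl) + (pathIndices u v n H).ncard := by
  have hpos : {x | x ∈ H.edgeSet ∧ subdivSign σ x = 1} =
      Sym2.map inl '' {d | d ∈ (H.comap inl).edgeSet ∧ σ d = 1} ∪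
        pathEdge u v n '' pathIndices u v n H := by
    rw [edgeSet_eq_of_le_subdiv hn hH]
    ext x
    constructor
    · rintro ⟨⟨d, hd, rfl⟩ | hx, hσ⟩
      · exact .inl ⟨d, ⟨hd, by rwa [subdivSign_map_inl] at hσ⟩, rfl⟩
      · exact .inr hx
    · rintro (⟨d, ⟨hd, hσ⟩, rfl⟩ | ⟨j, hj, rfl⟩)
      · exact ⟨.inl ⟨d, hd, rfl⟩, by rwa [subdivSign_map_inl]⟩
      · exact ⟨.inr ⟨j, hj, rfl⟩, subdivSign_pathEdge σ hn hj.1⟩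
  rw [posCount, hpos, ncard_image_inl_union_image_pathEdge hn huv _ fun j hj => hj.1]
  rfl

theorem ncard_edgeSet_of_le_subdiv (hn : 1 ≤ n) (huv : u ≠ v) (hH : H ≤ subdiv G u v n) :
    H.edgeSet.ncard = (H.comap inl).edgeSet.ncard + (pathIndices u v n H).ncard := by
  simpa only [subdivSign_const_one, posCount_const_one] using
    posCount_of_le_subdiv hn huv (fun _ => 1) hH

end Decomposition

section Lift

variable {V : Type*} {u v : V} {n : ℕ} {T : SimpleGraph V} {j : ℕ}

theorem pathIndices_subdiv (hn : 1 ≤ n) : pathIndices u v n (subdiv T u v n) = Set.Iic n :=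
  Set.ext fun _ => ⟨And.left, fun h => ⟨h, pathEdge_mem_edgeSet_subdiv hn h⟩⟩

theorem comap_inl_deleteEdges_subdiv (hn : 1 ≤ n) (hne : s(u, v) ∉ T.edgeSet) (hj : j ≤ n) :
    ((subdiv T u v n).deleteEdges {pathEdge u v n j}).comap inl = T := by
  ext a b
  simp only [comap_adj, deleteEdges_adj, subdiv_adj_inl, Set.mem_singleton_iff]
  exact ⟨fun h => h.1.1,
    fun hab => ⟨⟨hab, fun h => hne (h ▸ hab)⟩, map_inl_ne_pathEdge hn hj s(a, b)⟩⟩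

theorem pathIndices_deleteEdges_subdiv (hn : 1 ≤ n) (huv : u ≠ v) (hj : j ≤ n) :
    pathIndices u v n ((subdiv T u v n).deleteEdges {pathEdge u v n j}) = Set.Iic n \ {j} := by
  ext m
  simp only [pathIndices, edgeSet_deleteEdges, Set.mem_ofPred_eq, Set.mem_sdiff, Set.mem_Iic,
    Set.mem_singleton_iff]
  constructor
  · rintro ⟨hm, -, hne⟩
    exact ⟨hm, fun h => hne (h ▸ rfl)⟩
  · rintro ⟨hm, hne⟩
    exact ⟨hm, pathEdge_mem_edgeSet_subdiv hn hm, fun h => hne (pathEdge_injOn huv hm hj h)⟩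

theorem posCount_subdiv [Finite V] (hn : 1 ≤ n) (huv : u ≠ v) (σ : Sym2 V → ℤ)
    (he : T.Adj u v) (hsign : σ s(u, v) = 1) :
    posCount (subdivSign σ) (subdiv T u v n) = posCount σ T + n := by
  rw [posCount_of_le_subdiv hn huv σ le_rfl, comap_inl_subdiv, pathIndices_subdiv hn,
    Set.ncard_Iic_nat, ← posCount_deleteEdges_add_one he hsign]
  ring

theorem posCount_deleteEdges_subdiv [Finite V] (hn : 1 ≤ n) (huv : u ≠ v) (σ : Sym2 V → ℤ)
    (hne : s(u, v) ∉ T.edgeSet) (hj : j ≤ n) :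
    posCount (subdivSign σ) ((subdiv T u v n).deleteEdges {pathEdge u v n j}) =
      posCount σ T + n := by
  rw [posCount_of_le_subdiv hn huv σ (deleteEdges_le _), comap_inl_deleteEdges_subdiv hn hne hj,
    pathIndices_deleteEdges_subdiv hn huv hj, Set.ncard_sdiff_singleton_of_mem (by simpa),
    Set.ncard_Iic_nat, Nat.add_sub_cancel]

theorem subdiv_connected (hn : 1 ≤ n) (hT : T.Connected) : (subdiv T u v n).Connected := by
  have hpath : ∀ m ≤ n + 1, (subdiv T u v n).Reachable (inl u) (pathVert u v n m) := fun m hm =>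
    reachable_pathVert (Nat.zero_le m) fun _ _ _ => pathEdge_mem_edgeSet_subdiv hn (by omega)
  refine hT.lift inl (fun a b hab => ?_) ?_
  · by_cases he : s(a, b) = s(u, v)
    · have hreach := hpath (n + 1) le_rfl
      rw [pathVert_of_lt (Nat.lt_succ_self n)] at hreach
      rcases Sym2.eq_iff.1 he with ⟨rfl, rfl⟩ | ⟨rfl, rfl⟩
      exacts [hreach, hreach.symm]
    · exact (subdiv_adj_inl.2 ⟨hab, he⟩).reachable
  · rintro (a | i)
    · exact ⟨a, .rfl⟩
    · exact ⟨u, pathVert_succ i.2 ▸ hpath (i + 1) (by omega)⟩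

theorem deleteEdges_subdiv_connected (hn : 1 ≤ n) (huv : u ≠ v) (hne : s(u, v) ∉ T.edgeSet)
    (hj : j ≤ n) (hT : T.Connected) :
    ((subdiv T u v n).deleteEdges {pathEdge u v n j}).Connected := by
  set H := (subdiv T u v n).deleteEdges {pathEdge u v n j}
  have hpath : ∀ m₁ m₂, m₁ ≤ m₂ → m₂ ≤ n + 1 → (j < m₁ ∨ m₂ ≤ j) →
      H.Reachable (pathVert u v n m₁) (pathVert u v n m₂) := fun m₁ m₂ h₁ h₂ hj' =>
    reachable_pathVert h₁ fun m hm₁ hm₂ => by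
      have : m ∈ pathIndices u v n H := by
        rw [pathIndices_deleteEdges_subdiv hn huv hj]
        exact ⟨by simp; omega, by simp; omega⟩
      exact this.2
  refine hT.lift inl (fun a b hab => ?_) ?_
  · exact Adj.reachable (show (H.comap inl).Adj a b by rwa [comap_inl_deleteEdges_subdiv hn hne hj])
  · rintro (a | i)
    · exact ⟨a, .rfl⟩
    · by_cases hi : (i : ℕ) < j
      · exact ⟨u, pathVert_succ i.2 ▸ hpath 0 (i + 1) (by omega) (by omega) (by omega)⟩
      · refine ⟨v, ?_⟩
        have := hpath (i + 1) (n + 1) (by omega) le_rfl (by omega)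
        rw [pathVert_succ i.2, pathVert_of_lt (Nat.lt_succ_self n)] at this
        exact this.symm

end Lift

section Restriction

variable {V : Type*} {u v : V} {n : ℕ} {G T : SimpleGraph V} {H : SimpleGraph (V ⊕ Fin n)}

theorem SimpleGraph.Connected.collapse_subdiv (hc : H.Connected) (hn : 1 ≤ n)
    (hH : H ≤ subdiv G u v n) {K : SimpleGraph V} (hK : H.comap inl ≤ K) (g : Fin n → V)
    (hpath : ∀ j ∈ pathIndices u v n H,
      K.Reachable (Sum.elim id g (pathVert u v n j)) (Sum.elim id g (pathVert u v n (j + 1)))) :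
    K.Connected := by
  refine hc.lift (Sum.elim id g) (fun x y hxy => ?_) fun a => ⟨inl a, .rfl⟩
  rcases subdiv_adj_cases hn (hH hxy) with ⟨a, b, rfl, rfl⟩ | ⟨j, hj, hxy'⟩
  · exact (hK hxy).reachable
  · have := hpath j ⟨hj, hxy' ▸ hxy⟩
    rcases Sym2.eq_iff.1 hxy' with ⟨rfl, rfl⟩ | ⟨rfl, rfl⟩
    exacts [this, this.symm]

theorem SimpleGraph.Connected.of_subdiv (hn : 1 ≤ n) (he : T.Adj u v)
    (h : (subdiv T u v n).Connected) : T.Connected := by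
  refine h.collapse_subdiv hn le_rfl ((comap_inl_le_of_le_subdiv le_rfl).trans (deleteEdges_le _))
    (fun _ => u) fun j _ => ?_
  unfold pathVert
  split_ifs <;> first | exact .rfl | exact he.reachable | exact he.symm.reachable

theorem comap_inl_connected (hn : 1 ≤ n) (hH : H ≤ subdiv G u v n) (hc : H.Connected)
    {j₀ : ℕ} (hj₀ : j₀ ≤ n) (hmiss : pathEdge u v n j₀ ∉ H.edgeSet) :
    (H.comap inl).Connected := by
  set g : Fin n → V := fun i => if (i : ℕ) < j₀ then u else v
  have hg : ∀ m ≤ n + 1, Sum.elim id g (pathVert u v n m) = if m ≤ j₀ then u else v := by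
    intro m hm
    unfold pathVert
    split_ifs <;> simp only [g, Sum.elim_inl, Sum.elim_inr, id] <;> first | rfl | omega |
      (split_ifs <;> first | rfl | omega)
  refine hc.collapse_subdiv hn hH le_rfl g fun j ⟨hj, hmem⟩ => ?_
  have hjj₀ : j ≠ j₀ := fun h => hmiss (h ▸ hmem)
  rw [hg j (by omega), hg (j + 1) (by omega), if_congr (by omega : j ≤ j₀ ↔ j + 1 ≤ j₀) rfl rfl]

end Restriction

section SpanningTrees

variable {V : Type*} [Finite V] {u v : V} {n : ℕ} {G T : SimpleGraph V} {j : ℕ}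

theorem subdiv_isTree_iff (hn : 1 ≤ n) (huv : u ≠ v) (he : T.Adj u v) :
    (subdiv T u v n).IsTree ↔ T.IsTree := by
  have hcard : (subdiv T u v n).edgeSet.ncard = T.edgeSet.ncard + n := by
    simpa only [subdivSign_const_one, posCount_const_one] using
      posCount_subdiv hn huv (fun _ => 1) he rfl
  rw [isTree_iff_connected_and_ncard, isTree_iff_connected_and_ncard, hcard, Nat.card_sum,
    Nat.card_fin]
  exact and_congr ⟨Connected.of_subdiv hn he, subdiv_connected hn⟩ (by omega)

theorem SimpleGraph.IsTree.deleteEdges_subdiv (hn : 1 ≤ n) (huv : u ≠ v)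
    (hne : s(u, v) ∉ T.edgeSet) (hj : j ≤ n) (hT : T.IsTree) :
    ((subdiv T u v n).deleteEdges {pathEdge u v n j}).IsTree := by
  have hcard : ((subdiv T u v n).deleteEdges {pathEdge u v n j}).edgeSet.ncard =
      T.edgeSet.ncard + n := by
    simpa only [subdivSign_const_one, posCount_const_one] using
      posCount_deleteEdges_subdiv hn huv (fun _ => 1) hne hj
  rw [isTree_iff_connected_and_ncard] at hT ⊢
  refine ⟨deleteEdges_subdiv_connected hn huv hne hj hT.1, ?_⟩
  rw [hcard, Nat.card_sum, Nat.card_fin]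
  omega

variable {T' : SimpleGraph (V ⊕ Fin n)}

theorem exists_subdiv_eq (hn : 1 ≤ n) (huv : u ≠ v) (he : G.Adj u v)
    (hT' : T' ∈ spanningTrees (subdiv G u v n)) (hall : pathIndices u v n T' = Set.Iic n) :
    ∃ T ∈ spanningTrees G, T.Adj u v ∧ subdiv T u v n = T' := by
  have hle := comap_inl_le_of_le_subdiv hT'.1
  have hne : s(u, v) ∉ (T'.comap inl).edgeSet := fun h => by
    simpa using edgeSet_mono hle h
  set T := T'.comap inl ⊔ edge u v
  have hTe : T.Adj u v := by simp [T, edge_adj, huv]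
  have hsub : subdiv T u v n = T' := by
    refine eq_of_le_subdiv hn le_rfl hT'.1 ?_ (by rw [pathIndices_subdiv hn, hall])
    rw [comap_inl_subdiv, ← edgeSet_inj, edgeSet_deleteEdges, edgeSet_sup,
      edgeSet_edge_of_ne huv, Set.union_sdiff_right, Set.sdiff_singleton_eq_self hne]
  refine ⟨T, ⟨sup_le (hle.trans (deleteEdges_le _)) ?_, ?_⟩, hTe, hsub⟩
  · exact (edge_le_iff _).2 (.inr he)
  · exact (subdiv_isTree_iff hn huv hTe).1 (hsub ▸ hT'.2)

theorem exists_deleteEdges_subdiv_eq (hn : 1 ≤ n) (huv : u ≠ v)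
    (hT' : T' ∈ spanningTrees (subdiv G u v n)) {j₀ : ℕ} (hj₀ : j₀ ≤ n)
    (hmiss : pathEdge u v n j₀ ∉ T'.edgeSet) :
    ∃ T ∈ spanningTrees G, s(u, v) ∉ T.edgeSet ∧
      (subdiv T u v n).deleteEdges {pathEdge u v n j₀} = T' := by
  obtain ⟨hle, htree⟩ := hT'
  have hTle := comap_inl_le_of_le_subdiv hle
  have hne : s(u, v) ∉ (T'.comap inl).edgeSet := fun h => by
    simpa using edgeSet_mono hTle h
  have hT : (T'.comap inl).IsTree :=
    ⟨comap_inl_connected hn hle htree.connected hj₀ hmiss,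
      htree.isAcyclic.of_comap Function.Embedding.inl⟩
  -- `T'` has `|V| + n - 1` edges and the tree `T'.comap inl` has `|V| - 1`.
  have hidx : pathIndices u v n T' = Set.Iic n \ {j₀} := by
    refine Set.eq_of_subset_of_ncard_le
      (fun j hj => ⟨hj.1, fun h => hmiss (Set.mem_singleton_iff.1 h ▸ hj.2)⟩) ?_
    have hcount := ncard_edgeSet_of_le_subdiv hn huv hle
    rw [isTree_iff_connected_and_ncard] at htree hT
    rw [Set.ncard_sdiff_singleton_of_mem (by simpa), Set.ncard_Iic_nat]
    rw [Nat.card_sum, Nat.card_fin] at htree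
    omega
  refine ⟨T'.comap inl, ⟨hTle.trans (deleteEdges_le _), hT⟩, hne,
    eq_of_le_subdiv hn (deleteEdges_le _) hle ?_ ?_⟩
  · rw [comap_inl_deleteEdges_subdiv hn hne hj₀]
  · rw [pathIndices_deleteEdges_subdiv hn huv hj₀, hidx]

end SpanningTrees

section Injectivity

variable {V : Type*} {u v : V} {n : ℕ} {T₁ T₂ : SimpleGraph V} {j₁ j₂ : ℕ}

theorem subdiv_injOn : Set.InjOn (subdiv · u v n) {T | T.Adj u v} := by
  intro T₁ h₁ T₂ h₂ h
  have h' := congrArg (fun H => (H.comap inl).edgeSet) h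
  simp only [comap_inl_subdiv, edgeSet_deleteEdges] at h'
  rw [← edgeSet_inj, ← Set.insert_sdiff_self_of_mem (show s(u, v) ∈ T₁.edgeSet from h₁),
    ← Set.insert_sdiff_self_of_mem (show s(u, v) ∈ T₂.edgeSet from h₂), h']

theorem subdiv_ne_deleteEdges_subdiv (hn : 1 ≤ n) (hj : j₂ ≤ n) :
    subdiv T₁ u v n ≠ (subdiv T₂ u v n).deleteEdges {pathEdge u v n j₂} := fun h => by
  have := pathEdge_mem_edgeSet_subdiv (G := T₁) (u := u) (v := v) hn hj
  rw [h, edgeSet_deleteEdges] at this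
  exact this.2 rfl

theorem deleteEdges_subdiv_inj (hn : 1 ≤ n) (huv : u ≠ v) (hne₁ : s(u, v) ∉ T₁.edgeSet)
    (hne₂ : s(u, v) ∉ T₂.edgeSet) (hj₁ : j₁ ≤ n) (hj₂ : j₂ ≤ n)
    (h : (subdiv T₁ u v n).deleteEdges {pathEdge u v n j₁} =
      (subdiv T₂ u v n).deleteEdges {pathEdge u v n j₂}) : T₁ = T₂ ∧ j₁ = j₂ := by
  have hT := congrArg (SimpleGraph.comap inl) h
  have hJ := congrArg (pathIndices u v n) h
  rw [comap_inl_deleteEdges_subdiv hn hne₁ hj₁, comap_inl_deleteEdges_subdiv hn hne₂ hj₂] at hT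
  rw [pathIndices_deleteEdges_subdiv hn huv hj₁, pathIndices_deleteEdges_subdiv hn huv hj₂] at hJ
  refine ⟨hT, by_contra fun hne => ?_⟩
  have : j₁ ∈ Set.Iic n \ {j₂} := ⟨hj₁, hne⟩
  rw [← hJ] at this
  exact this.2 rfl

end Injectivity

section Counting

variable {V : Type*} [Finite V] {G : SimpleGraph V} {u v : V} {n : ℕ} {σ : Sym2 V → ℤ} {k : ℤ}

def liftTree (hn : 1 ≤ n) (huv : u ≠ v) (hsign : σ s(u, v) = 1) :
    {T ∈ spanningTrees G | s(u, v) ∈ T.edgeSet ∧ (posCount σ T : ℤ) = k - n} ⊕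
      {T ∈ spanningTrees G | s(u, v) ∉ T.edgeSet ∧ (posCount σ T : ℤ) = k - n} × Fin (n + 1) →
    {T' ∈ spanningTrees (subdiv G u v n) | (posCount (subdivSign σ) T' : ℤ) = k}
  | inl T => ⟨subdiv T u v n,
      ⟨subdiv_mono T.2.1.1, (subdiv_isTree_iff hn huv T.2.2.1).2 T.2.1.2⟩,
      by rw [posCount_subdiv hn huv σ T.2.2.1 hsign]; push_cast; linarith [T.2.2.2]⟩
  | inr (T, j) => ⟨(subdiv T u v n).deleteEdges {pathEdge u v n j},
      ⟨(deleteEdges_le _).trans (subdiv_mono T.2.1.1),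
        T.2.1.2.deleteEdges_subdiv hn huv T.2.2.1 j.is_le⟩,
      by rw [posCount_deleteEdges_subdiv hn huv σ T.2.2.1 j.is_le]; push_cast; linarith [T.2.2.2]⟩

theorem liftTree_injective (hn : 1 ≤ n) (huv : u ≠ v) (hsign : σ s(u, v) = 1) :
    (liftTree (G := G) (k := k) hn huv hsign).Injective := by
  rintro (⟨T₁, h₁⟩ | ⟨⟨T₁, h₁⟩, j₁⟩) (⟨T₂, h₂⟩ | ⟨⟨T₂, h₂⟩, j₂⟩) h <;>
    simp only [liftTree, Subtype.mk.injEq] at h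
  · obtain rfl := subdiv_injOn h₁.2.1 h₂.2.1 h
    rfl
  · exact absurd h (subdiv_ne_deleteEdges_subdiv hn j₂.is_le)
  · exact absurd h.symm (subdiv_ne_deleteEdges_subdiv hn j₁.is_le)
  · obtain ⟨rfl, hj⟩ := deleteEdges_subdiv_inj hn huv h₁.2.1 h₂.2.1 j₁.is_le j₂.is_le h
    obtain rfl := Fin.ext hj
    rfl

theorem liftTree_surjective (hn : 1 ≤ n) (he : G.Adj u v) (hsign : σ s(u, v) = 1) :
    (liftTree (G := G) (k := k) hn he.ne hsign).Surjective := by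
  rintro ⟨T', hT', hk⟩
  by_cases hall : pathIndices u v n T' = Set.Iic n
  · obtain ⟨T, hT, hTe, rfl⟩ := exists_subdiv_eq hn he.ne he hT' hall
    refine ⟨inl ⟨T, hT, hTe, ?_⟩, rfl⟩
    rw [posCount_subdiv hn he.ne σ hTe hsign] at hk
    push_cast at hk
    omega
  · obtain ⟨j, hj, hmiss⟩ : ∃ j ≤ n, pathEdge u v n j ∉ T'.edgeSet := by
      by_contra! h
      exact hall (Set.ext fun j => ⟨And.left, fun hj => ⟨hj, h j hj⟩⟩)
    obtain ⟨T, hT, hne, rfl⟩ := exists_deleteEdges_subdiv_eq hn he.ne hT' hj hmiss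
    refine ⟨inr (⟨T, hT, hne, ?_⟩, ⟨j, Nat.lt_succ_of_le hj⟩), rfl⟩
    rw [posCount_deleteEdges_subdiv hn he.ne σ hne hj] at hk
    push_cast at hk
    omega

end Counting

theorem subdiv_posCount_card_general {V : Type*} [Fintype V] (G : SimpleGraph V)
    (σ : Sym2 V → ℤ)
    (u v : V) (he : G.Adj u v) (hsign : σ s(u, v) = 1)
    (n : ℕ) (hn : 1 ≤ n) (k : ℤ) :
    {T' ∈ spanningTrees (subdiv G u v n) |
        (posCount (subdivSign σ) T' : ℤ) = k}.ncard =
      {T ∈ spanningTrees G |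
          s(u, v) ∈ T.edgeSet ∧ (posCount σ T : ℤ) = k - n}.ncard +
        (n + 1) *
          {T ∈ spanningTrees G |
              s(u, v) ∉ T.edgeSet ∧ (posCount σ T : ℤ) = k - n}.ncard := by
  have := Nat.card_congr <| Equiv.ofBijective _
    ⟨liftTree_injective (k := k) hn he.ne hsign, liftTree_surjective hn he hsign⟩
  simp only [Nat.card_sum, Nat.card_prod, Nat.card_fin, Nat.card_coe_set_eq] at this
  rw [← this, mul_comm]

/-- For every integer `k`, the number of spanning trees `T'` of `G^n` with
`v(T') = k` equals the number of spanning trees `T` of `G` with `e ∈ T` and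
`v(T) = k - n`, plus `(n+1)` times the number of spanning trees `T` of `G`
with `e ∉ T` and `v(T) = k - n`. -/
theorem subdiv_posCount_card {V : Type*} [Fintype V] (G : SimpleGraph V)
    (hG : G.Connected) (σ : Sym2 V → ℤ)
    (hσ : ∀ ed ∈ G.edgeSet, σ ed = 1 ∨ σ ed = -1)
    (u v : V) (he : G.Adj u v) (hsign : σ s(u, v) = 1)
    (n : ℕ) (hn : 1 ≤ n) (k : ℤ) :
    {T' ∈ spanningTrees (subdiv G u v n) |
        (posCount (subdivSign σ) T' : ℤ) = k}.ncard =
      {T ∈ spanningTrees G |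
          s(u, v) ∈ T.edgeSet ∧ (posCount σ T : ℤ) = k - n}.ncard +
        (n + 1) *
          {T ∈ spanningTrees G |
              s(u, v) ∉ T.edgeSet ∧ (posCount σ T : ℤ) = k - n}.ncard :=
  subdiv_posCount_card_general G σ u v he hsign n hn k
end

section
/- The total number of spanning trees of G^n equals the number of spanning trees of G containing e, plus (n+1) times the number of spanning trees of G not containing e. -/
open Sum

/-!
A spanning tree `T` of `G^n` misses at most one path edge `eₖ`: missing both `eⱼ` and `eₖ`, `j < k`,
would cut `wⱼ₊₁, …, wₖ` off from `u`. If `T` contains every `eₖ`, contracting the path back to `e`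
gives a spanning tree of `G` through `e`; if `T` misses exactly `eₖ`, deleting the path gives a
spanning tree of `G` avoiding `e`, and every such tree arises once for each of the `n + 1` values
of `k`. Re-inserting the path inverts both maps. Trees are recognised as connected graphs with
`|E| + 1 = |V|`, and connectivity passes from `T` to `G` by retracting the path onto its ends.
-/

open SimpleGraph

namespace SimpleGraph

variable {X Y : Type*}

theorem Reachable.map_of_forall_adj {G : SimpleGraph X} {H : SimpleGraph Y} {f : X → Y}
    (hf : ∀ a b, G.Adj a b → H.Reachable (f a) (f b))
    {x y : X} (h : G.Reachable x y) : H.Reachable (f x) (f y) := by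
  obtain ⟨w⟩ := h
  induction w with
  | nil => rfl
  | cons ha _ ih => exact (hf _ _ ha).trans ih

theorem Connected.of_reachable_inl {S : SimpleGraph X} {W : SimpleGraph (X ⊕ Y)}
    (hS : S.Connected)
    (hadj : ∀ a b, S.Adj a b → W.Reachable (inl a) (inl b))
    (hinr : ∀ y, ∃ a, W.Reachable (inl a) (inr y)) : W.Connected := by
  obtain ⟨a₀⟩ := hS.nonempty
  have : Nonempty (X ⊕ Y) := ⟨inl a₀⟩
  have hreach : ∀ x, W.Reachable (inl a₀) x := by
    rintro (a | y)
    · exact (hS.preconnected a₀ a).map_of_forall_adj hadj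
    · obtain ⟨a, ha⟩ := hinr y
      exact ((hS.preconnected a₀ a).map_of_forall_adj hadj).trans ha
  exact ⟨fun x y => (hreach x).symm.trans (hreach y)⟩

theorem isTree_iff_connected_and_ncard_s1 [Finite X] {G : SimpleGraph X} :
    G.IsTree ↔ G.Connected ∧ G.edgeSet.ncard + 1 = Nat.card X :=
  isTree_iff_connected_and_card

theorem sdiff_edge_adj {G : SimpleGraph X} {u v a b : X} :
    (G \ edge u v).Adj a b ↔ G.Adj a b ∧ s(a, b) ≠ s(u, v) :=
  deleteEdges_adj

theorem notMem_edgeSet_of_le_sdiff_edge {G S : SimpleGraph X} {u v : X}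
    (h : S ≤ G \ edge u v) : s(u, v) ∉ S.edgeSet :=
  fun huv => (sdiff_edge_adj.mp (h huv)).2 rfl

end SimpleGraph

theorem Fin.ncard_compl_singleton {n : ℕ} (k : Fin (n + 1)) :
    ({k}ᶜ : Set (Fin (n + 1))).ncard = n := by
  rw [Set.ncard_compl, Set.ncard_singleton, Nat.card_fin, Nat.add_sub_cancel]

namespace Subdivision

variable {V : Type*} {G S : SimpleGraph V} (u v : V) (n : ℕ)

/-- The vertex `wₘ` of the path `u = w₀ — w₁ — ⋯ — wₙ — wₙ₊₁ = v`; the new vertex `wₘ`,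
`1 ≤ m ≤ n`, is `inr (m - 1)` in `subdiv`. -/
def pathVert (m : ℕ) : V ⊕ Fin n :=
  if h₀ : m = 0 then inl u else if h : m ≤ n then inr ⟨m - 1, by omega⟩ else inl v

def pathEdge (k : Fin (n + 1)) : Sym2 (V ⊕ Fin n) :=
  s(pathVert u v n k, pathVert u v n (k + 1))

def withPath (S : SimpleGraph V) (K : Set (Fin (n + 1))) : SimpleGraph (V ⊕ Fin n) :=
  S.map Function.Embedding.inl ⊔ fromEdgeSet (pathEdge u v n '' K)

variable {u v n} {K : Set (Fin (n + 1))}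

theorem pathVert_zero : pathVert u v n 0 = inl u := rfl

theorem pathVert_val_add_one (i : Fin n) : pathVert u v n (i + 1) = inr i := by
  have := i.isLt
  rw [pathVert, dif_neg (by omega), dif_pos (by omega)]
  rfl

theorem pathVert_of_lt {m : ℕ} (h : n < m) : pathVert u v n m = inl v := by
  rw [pathVert, dif_neg (by omega), dif_neg (by omega)]

theorem pathVert_cases (m : ℕ) :
    (m = 0 ∧ pathVert u v n m = inl u) ∨
      (∃ i : Fin n, (i : ℕ) + 1 = m ∧ pathVert u v n m = inr i) ∨
      (n < m ∧ pathVert u v n m = inl v) := by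
  rcases Nat.eq_zero_or_pos m with rfl | h0
  · exact .inl ⟨rfl, rfl⟩
  by_cases hm : m ≤ n
  · exact .inr (.inl ⟨⟨m - 1, by omega⟩, Nat.sub_add_cancel h0,
      by rw [pathVert, dif_neg (by omega), dif_pos hm]⟩)
  · exact .inr (.inr ⟨by omega, pathVert_of_lt (by omega)⟩)

theorem pathVert_ne_pathVert_succ (hn : 1 ≤ n) {m : ℕ} (hm : m ≤ n) :
    pathVert u v n m ≠ pathVert u v n (m + 1) := by
  rcases pathVert_cases (u := u) (v := v) (n := n) m with ⟨h1, e1⟩ | ⟨i, h1, e1⟩ | ⟨h1, e1⟩ <;>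
    rcases pathVert_cases (u := u) (v := v) (n := n) (m + 1) with
      ⟨h2, e2⟩ | ⟨j, h2, e2⟩ | ⟨h2, e2⟩ <;>
    simp only [e1, e2, ne_eq, reduceCtorEq, not_false_eq_true, inr.injEq, Fin.ext_iff] <;>
    omega

theorem pathVert_injOn (huv : u ≠ v) : Set.InjOn (pathVert u v n) (Set.Iic (n + 1)) := by
  intro m hm m' hm' h
  simp only [Set.mem_Iic] at hm hm'
  rcases pathVert_cases (u := u) (v := v) (n := n) m with ⟨h1, e1⟩ | ⟨i, h1, e1⟩ | ⟨h1, e1⟩ <;>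
    rcases pathVert_cases (u := u) (v := v) (n := n) m' with
      ⟨h2, e2⟩ | ⟨j, h2, e2⟩ | ⟨h2, e2⟩ <;>
    simp only [e1, e2, reduceCtorEq, inr.injEq, inl.injEq, Fin.ext_iff] at h <;>
    first | omega | exact absurd h huv | exact absurd h.symm huv

theorem pathEdge_injective (huv : u ≠ v) : Function.Injective (pathEdge u v n) := by
  intro k k' h
  have hk := k.is_le
  have hk' := k'.is_le
  have inj := pathVert_injOn (n := n) huv
  rcases Sym2.eq_iff.mp h with ⟨h1, -⟩ | ⟨h1, h2⟩
  · exact Fin.ext (inj (Set.mem_Iic.mpr (by omega)) (Set.mem_Iic.mpr (by omega)) h1)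
  · have e1 := inj (Set.mem_Iic.mpr (by omega)) (Set.mem_Iic.mpr (by omega)) h1
    have e2 := inj (Set.mem_Iic.mpr (by omega)) (Set.mem_Iic.mpr (by omega)) h2
    omega

theorem map_inl_ne_pathEdge (hn : 1 ≤ n) (e : Sym2 V) (k : Fin (n + 1)) :
    Sym2.map inl e ≠ pathEdge u v n k := by
  obtain ⟨i, hi⟩ : ∃ i : Fin n, inr i ∈ pathEdge u v n k := by
    rcases pathVert_cases (u := u) (v := v) (n := n) k with ⟨hk, -⟩ | ⟨i, -, hi⟩ | ⟨hk, -⟩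
    · refine ⟨⟨0, hn⟩, ?_⟩
      rw [pathEdge, hk, ← pathVert_val_add_one]
      exact Sym2.mem_mk_right _ _
    · exact ⟨i, hi ▸ Sym2.mem_mk_left _ _⟩
    · exact absurd hk (by omega)
  intro h
  rw [← h, Sym2.mem_map] at hi
  obtain ⟨a, -, ha⟩ := hi
  exact inl_ne_inr ha

theorem withPath_adj {x y : V ⊕ Fin n} :
    (withPath u v n S K).Adj x y ↔
      (∃ a b, S.Adj a b ∧ inl a = x ∧ inl b = y) ∨ (s(x, y) ∈ pathEdge u v n '' K ∧ x ≠ y) := by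
  rw [withPath, sup_adj, map_adj, fromEdgeSet_adj]
  rfl

theorem withPath_adj_pathVert (hn : 1 ≤ n) {m : ℕ} (hm : m < n + 1) (hK : ⟨m, hm⟩ ∈ K) :
    (withPath u v n S K).Adj (pathVert u v n m) (pathVert u v n (m + 1)) :=
  .inr ⟨⟨_, hK, rfl⟩, pathVert_ne_pathVert_succ hn (by omega)⟩

theorem withPath_mono {S' : SimpleGraph V} {K' : Set (Fin (n + 1))} (hS : S ≤ S')
    (hK : K ⊆ K') : withPath u v n S K ≤ withPath u v n S' K' :=
  sup_le_sup (map_monotone _ hS) (fromEdgeSet_mono (Set.image_mono hK))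

theorem edgeSet_withPath (hn : 1 ≤ n) :
    (withPath u v n S K).edgeSet =
      Function.Embedding.inl.sym2Map '' S.edgeSet ∪ pathEdge u v n '' K := by
  rw [withPath, edgeSet_sup, edgeSet_map, edgeSet_fromEdgeSet, sdiff_eq_left.mpr]
  rw [Set.disjoint_left]
  rintro _ ⟨k, -, rfl⟩ hd
  exact pathVert_ne_pathVert_succ hn k.is_le (Sym2.mk_isDiag_iff.mp hd)

theorem comap_withPath (hn : 1 ≤ n) : (withPath u v n S K).comap inl = S := by
  ext a b
  rw [comap_adj, withPath_adj]
  constructor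
  · rintro (⟨a', b', hab, ha, hb⟩ | ⟨⟨k, -, hk⟩, -⟩)
    · rwa [← inl_injective ha, ← inl_injective hb]
    · exact absurd hk (map_inl_ne_pathEdge hn s(a, b) k).symm
  · exact fun hab => .inl ⟨a, b, hab, rfl, rfl⟩

theorem pathEdge_mem_edgeSet_withPath (hn : 1 ≤ n) (huv : u ≠ v) (k : Fin (n + 1)) :
    pathEdge u v n k ∈ (withPath u v n S K).edgeSet ↔ k ∈ K := by
  rw [edgeSet_withPath hn, Set.mem_union, (pathEdge_injective huv).mem_set_image]
  refine or_iff_right ?_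
  rintro ⟨e, -, he⟩
  exact map_inl_ne_pathEdge hn e k he

theorem withPath_inj (hn : 1 ≤ n) (huv : u ≠ v) {S' : SimpleGraph V} {K' : Set (Fin (n + 1))} :
    withPath u v n S K = withPath u v n S' K' ↔ S = S' ∧ K = K' := by
  refine ⟨fun h => ⟨?_, ?_⟩, fun h => h.1 ▸ h.2 ▸ rfl⟩
  · rw [← comap_withPath (u := u) (v := v) (S := S) (K := K) hn, h, comap_withPath hn]
  · ext k
    rw [← pathEdge_mem_edgeSet_withPath (S := S) hn huv, h, pathEdge_mem_edgeSet_withPath hn huv]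

theorem ncard_edgeSet_withPath [Finite V] (hn : 1 ≤ n) (huv : u ≠ v) :
    (withPath u v n S K).edgeSet.ncard = S.edgeSet.ncard + K.ncard := by
  rw [edgeSet_withPath hn, Set.ncard_union_eq, Set.ncard_image_of_injective _
    Function.Embedding.inl.sym2Map.injective, Set.ncard_image_of_injective _
    (pathEdge_injective huv)]
  rw [Set.disjoint_left]
  rintro _ ⟨e, -, rfl⟩ ⟨k, -, hk⟩
  exact map_inl_ne_pathEdge hn e k hk.symm

theorem subdiv_adj_pathVert (hn : 1 ≤ n) (G : SimpleGraph V) {m : ℕ} (hm : m ≤ n) :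
    (subdiv G u v n).Adj (pathVert u v n m) (pathVert u v n (m + 1)) := by
  rw [subdiv, fromRel_adj]
  refine ⟨pathVert_ne_pathVert_succ hn hm, ?_⟩
  rcases pathVert_cases (u := u) (v := v) (n := n) m with ⟨h1, e1⟩ | ⟨i, h1, e1⟩ | ⟨h1, e1⟩ <;>
    rcases pathVert_cases (u := u) (v := v) (n := n) (m + 1) with
      ⟨h2, e2⟩ | ⟨j, h2, e2⟩ | ⟨h2, e2⟩ <;>
    simp only [e1, e2, true_and, false_or, or_false] <;>
    first | (exfalso; omega) | omega

theorem subdiv_eq_withPath (hn : 1 ≤ n) (G : SimpleGraph V) :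
    subdiv G u v n = withPath u v n (G \ edge u v) Set.univ := by
  refine le_antisymm (fun x y hxy => ?_) (fun x y hxy => ?_)
  · have adj_inl_inr {a : V} {j : Fin n} (h : a = u ∧ (j : ℕ) = 0 ∨ a = v ∧ (j : ℕ) = n - 1) :
        (withPath u v n (G \ edge u v) Set.univ).Adj (inl a) (inr j) := by
      rw [← pathVert_val_add_one (u := u) (v := v) j]
      rcases h with ⟨rfl, hj⟩ | ⟨rfl, hj⟩
      · rw [hj, ← pathVert_zero (v := v) (n := n)]
        exact withPath_adj_pathVert hn (m := 0) (by omega) (Set.mem_univ _)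
      · rw [hj, Nat.sub_add_cancel hn, ← pathVert_of_lt (u := u) (lt_add_one n)]
        exact (withPath_adj_pathVert hn (m := n) (by omega) (Set.mem_univ _)).symm
    have adj_inr_inr {i j : Fin n} (h : (j : ℕ) = i + 1) :
        (withPath u v n (G \ edge u v) Set.univ).Adj (inr i) (inr j) := by
      rw [← pathVert_val_add_one (u := u) (v := v) i, ← pathVert_val_add_one j, h]
      exact withPath_adj_pathVert hn (by omega) (Set.mem_univ _)
    obtain ⟨-, hxy⟩ := (fromRel_adj _ _ _).mp hxy
    rcases x with a | i <;> rcases y with b | j <;> simp only [or_false, false_or] at hxy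
    · rcases hxy with h | h
      · exact withPath_adj.mpr (.inl ⟨a, b, sdiff_edge_adj.mpr h, rfl, rfl⟩)
      · exact (withPath_adj.mpr (.inl ⟨b, a, sdiff_edge_adj.mpr h, rfl, rfl⟩)).symm
    · exact adj_inl_inr hxy
    · exact (adj_inl_inr hxy).symm
    · exact hxy.elim adj_inr_inr (fun h => (adj_inr_inr h).symm)
  · rcases withPath_adj.mp hxy with ⟨a, b, hab, rfl, rfl⟩ | ⟨⟨k, -, hk⟩, -⟩
    · rw [sdiff_edge_adj] at hab
      exact (fromRel_adj _ _ _).mpr ⟨by simpa using hab.1.ne, .inl hab⟩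
    · rcases Sym2.eq_iff.mp hk with ⟨rfl, rfl⟩ | ⟨rfl, rfl⟩
      · exact subdiv_adj_pathVert hn G k.is_le
      · exact (subdiv_adj_pathVert hn G k.is_le).symm

theorem eq_withPath_of_le_subdiv (hn : 1 ≤ n) {G : SimpleGraph V}
    {T : SimpleGraph (V ⊕ Fin n)} (hT : T ≤ subdiv G u v n) :
    T = withPath u v n (T.comap inl) {k | pathEdge u v n k ∈ T.edgeSet} := by
  ext x y
  rw [withPath_adj]
  constructor
  · intro hxy
    rcases withPath_adj.mp (subdiv_eq_withPath hn G ▸ hT hxy) with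
      ⟨a, b, -, rfl, rfl⟩ | ⟨⟨k, -, hk⟩, hne⟩
    · exact .inl ⟨a, b, hxy, rfl, rfl⟩
    · exact .inr ⟨⟨k, by rw [Set.mem_ofPred_eq, hk]; exact hxy, hk⟩, hne⟩
  · rintro (⟨a, b, hab, rfl, rfl⟩ | ⟨⟨k, hk, hxy⟩, -⟩)
    · exact hab
    · rw [← mem_edgeSet, ← hxy]
      exact hk

theorem le_sdiff_edge_of_withPath_le_subdiv (hn : 1 ≤ n)
    (h : withPath u v n S K ≤ subdiv G u v n) : S ≤ G \ edge u v := by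
  rw [subdiv_eq_withPath hn] at h
  rw [← comap_withPath (u := u) (v := v) (S := S) (K := K) hn,
    ← comap_withPath (u := u) (v := v) (S := G \ edge u v) (K := Set.univ) hn]
  exact fun a b hab => h hab

theorem Reachable.map_of_withPath {Y : Type*} {H : SimpleGraph Y} {f : V ⊕ Fin n → Y}
    (hS : ∀ a b, S.Adj a b → H.Reachable (f (inl a)) (f (inl b)))
    (hK : ∀ k ∈ K, H.Reachable (f (pathVert u v n k)) (f (pathVert u v n (k + 1))))
    {x y : V ⊕ Fin n} (h : (withPath u v n S K).Reachable x y) : H.Reachable (f x) (f y) := by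
  refine h.map_of_forall_adj fun x y hxy => ?_
  rcases withPath_adj.mp hxy with ⟨a, b, hab, rfl, rfl⟩ | ⟨⟨k, hk, he⟩, -⟩
  · exact hS a b hab
  · rcases Sym2.eq_iff.mp he with ⟨rfl, rfl⟩ | ⟨rfl, rfl⟩
    · exact hK k hk
    · exact (hK k hk).symm

theorem reachable_pathVert (hn : 1 ≤ n) {i j : ℕ} (hij : i ≤ j) (hj : j ≤ n + 1)
    (hK : ∀ m (hm : m < n + 1), i ≤ m → m < j → ⟨m, hm⟩ ∈ K) :
    (withPath u v n S K).Reachable (pathVert u v n i) (pathVert u v n j) := by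
  induction j, hij using Nat.le_induction with
  | base => rfl
  | succ j hij ih =>
    exact (ih (by omega) fun m hm h1 h2 => hK m hm h1 (by omega)).trans
      (withPath_adj_pathVert hn (by omega) (hK j (by omega) hij (lt_add_one j))).reachable

variable (u v) in
/-- Collapses the path onto its ends: `wₘ ↦ u` for `m ≤ k` and `wₘ ↦ v` for `m > k`. -/
def pathRetract (k : ℕ) : V ⊕ Fin n → V :=
  Sum.elim id fun i => if (i : ℕ) < k then u else v

theorem pathRetract_pathVert {k : ℕ} (hk : k ≤ n) (m : ℕ) :
    pathRetract u v k (pathVert u v n m) = if m ≤ k then u else v := by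
  rcases pathVert_cases (u := u) (v := v) (n := n) m with ⟨h, e⟩ | ⟨i, h, e⟩ | ⟨h, e⟩ <;>
    rw [e, pathRetract]
  · simp [h]
  · simp only [elim_inr]
    congr 1
    exact propext (by omega)
  · simp only [elim_inl, id_eq]
    rw [if_neg (by omega)]

theorem connected_sup_edge_of_connected_withPath (h : (withPath u v n S K).Connected) :
    (S ⊔ edge u v).Connected := by
  have huv : (S ⊔ edge u v).Reachable u v := by
    by_cases huv : u = v
    · rw [huv]
    · exact Adj.reachable (.inr ((edge_adj _ _ _ _).mpr ⟨.inl ⟨rfl, rfl⟩, huv⟩))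
  have : Nonempty V := ⟨u⟩
  refine ⟨fun a b => Reachable.map_of_withPath (f := pathRetract u v 0)
    (fun a b hab => Adj.reachable (G := S ⊔ edge u v) (.inl hab)) (fun k _ => ?_)
    (h.preconnected (inl a) (inl b))⟩
  rw [pathRetract_pathVert (Nat.zero_le n), pathRetract_pathVert (Nat.zero_le n)]
  rcases Nat.eq_zero_or_pos (k : ℕ) with hk | hk
  · rw [hk, if_pos le_rfl, if_neg (by omega)]
    exact huv
  · rw [if_neg (by omega), if_neg (by omega)]

theorem connected_of_connected_withPath {k : Fin (n + 1)} (hk : k ∉ K)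
    (h : (withPath u v n S K).Connected) : S.Connected := by
  have : Nonempty V := ⟨u⟩
  refine ⟨fun a b => Reachable.map_of_withPath (f := pathRetract u v k)
    (fun a b hab => hab.reachable) (fun k' hk' => ?_) (h.preconnected (inl a) (inl b))⟩
  have hne : (k' : ℕ) ≠ k := Fin.val_ne_of_ne fun h => hk (h ▸ hk')
  rw [pathRetract_pathVert k.is_le, pathRetract_pathVert k.is_le]
  split_ifs <;> first | rfl | omega

theorem subsingleton_compl_of_connected_withPath (h : (withPath u v n S K).Connected) :
    Kᶜ.Subsingleton := by
  suffices key : ∀ j k : Fin (n + 1), j ∉ K → k ∉ K → (j : ℕ) < k → False by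
    intro j hj k hk
    by_contra hne
    rcases Nat.lt_or_gt_of_ne (Fin.val_ne_of_ne hne) with hjk | hjk
    exacts [key j k hj hk hjk, key k j hk hj hjk]
  intro j k hj hk hjk
  let inner : V ⊕ Fin n → Prop := Sum.elim (fun _ => False) fun i => (j : ℕ) ≤ i ∧ (i : ℕ) < k
  have inner_pathVert (m : ℕ) : inner (pathVert u v n m) ↔ (j : ℕ) < m ∧ m ≤ k := by
    have := k.is_le
    rcases pathVert_cases (u := u) (v := v) (n := n) m with ⟨hm, e⟩ | ⟨i, hm, e⟩ | ⟨hm, e⟩ <;>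
      simp only [inner, e, elim_inl, elim_inr, false_iff, not_and, not_le] <;> omega
  have hreach := Reachable.map_of_withPath (H := ⊥) (f := inner)
    (fun _ _ _ => Reachable.refl _) (fun m hm => reachable_bot.mpr (propext ?_))
    (h.preconnected (inl u) (pathVert u v n (j + 1)))
  · rw [reachable_bot, ← pathVert_zero (v := v) (n := n), eq_comm, eq_iff_iff,
      inner_pathVert, inner_pathVert] at hreach
    omega
  · have hmj : (m : ℕ) ≠ j := Fin.val_ne_of_ne fun e => hj (e ▸ hm)
    have hmk : (m : ℕ) ≠ k := Fin.val_ne_of_ne fun e => hk (e ▸ hm)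
    rw [inner_pathVert, inner_pathVert]
    omega

theorem connected_withPath_compl_singleton (hn : 1 ≤ n) (hS : S.Connected)
    (k : Fin (n + 1)) : (withPath u v n S {k}ᶜ).Connected := by
  have hmem {m : ℕ} (hm : m < n + 1) (hmk : m ≠ k) : (⟨m, hm⟩ : Fin (n + 1)) ∈ ({k}ᶜ : Set _) :=
    fun e => hmk (congrArg Fin.val e)
  refine hS.of_reachable_inl
    (fun a b hab => (withPath_adj.mpr (.inl ⟨a, b, hab, rfl, rfl⟩)).reachable) fun i => ?_
  rw [← pathVert_val_add_one (u := u) (v := v) i]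
  by_cases hik : (i : ℕ) + 1 ≤ k
  · refine ⟨u, reachable_pathVert hn (Nat.zero_le _) (by omega) fun m hm _ h => hmem hm (by omega)⟩
  · refine ⟨v, ?_⟩
    rw [← pathVert_of_lt (u := u) (lt_add_one n)]
    exact (reachable_pathVert hn (by omega) le_rfl fun m hm h _ => hmem hm (by omega)).symm

theorem connected_withPath_sdiff_edge (hn : 1 ≤ n) (hS : S.Connected) :
    (withPath u v n (S \ edge u v) Set.univ).Connected := by
  have hpath {i j : ℕ} (hij : i ≤ j) (hj : j ≤ n + 1) :=
    reachable_pathVert (u := u) (v := v) (S := S \ edge u v) hn hij hj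
      fun _ _ _ _ => Set.mem_univ _
  have huv : (withPath u v n (S \ edge u v) Set.univ).Reachable (inl u) (inl v) := by
    rw [← pathVert_zero (v := v) (n := n), ← pathVert_of_lt (u := u) (lt_add_one n)]
    exact hpath (Nat.zero_le _) le_rfl
  refine hS.of_reachable_inl (fun a b hab => ?_) fun i => ⟨u, ?_⟩
  · by_cases he : s(a, b) = s(u, v)
    · rcases Sym2.eq_iff.mp he with ⟨rfl, rfl⟩ | ⟨rfl, rfl⟩
      exacts [huv, huv.symm]
    · exact (withPath_adj.mpr (.inl ⟨a, b, sdiff_edge_adj.mpr ⟨hab, he⟩, rfl, rfl⟩)).reachable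
  · rw [← pathVert_zero (v := v) (n := n), ← pathVert_val_add_one i]
    exact hpath (Nat.zero_le _) (by omega)

theorem ncard_edgeSet_add_of_withPath_mem_spanningTrees [Finite V] (hn : 1 ≤ n) (huv : u ≠ v)
    (h : withPath u v n S K ∈ spanningTrees (subdiv G u v n)) :
    S.edgeSet.ncard + K.ncard + 1 = Nat.card V + n := by
  have := (isTree_iff_connected_and_ncard_s1.mp h.2).2
  rwa [ncard_edgeSet_withPath hn huv, Nat.card_sum, Nat.card_fin] at this

theorem withPath_mem_spanningTrees [Finite V] (hn : 1 ≤ n) (huv : u ≠ v)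
    (hle : S ≤ G \ edge u v) (hconn : (withPath u v n S K).Connected)
    (hcard : S.edgeSet.ncard + K.ncard + 1 = Nat.card V + n) :
    withPath u v n S K ∈ spanningTrees (subdiv G u v n) := by
  refine ⟨subdiv_eq_withPath hn G ▸ withPath_mono hle (Set.subset_univ K), ?_⟩
  rw [isTree_iff_connected_and_ncard_s1, ncard_edgeSet_withPath hn huv, Nat.card_sum, Nat.card_fin]
  exact ⟨hconn, hcard⟩

theorem sup_edge_mem_spanningTrees [Finite V] (hn : 1 ≤ n) (he : G.Adj u v)
    (h : withPath u v n S Set.univ ∈ spanningTrees (subdiv G u v n)) :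
    S ⊔ edge u v ∈ spanningTrees G := by
  have hle := le_sdiff_edge_of_withPath_le_subdiv hn h.1
  have hcard := ncard_edgeSet_add_of_withPath_mem_spanningTrees hn he.ne h
  refine ⟨sup_le (hle.trans sdiff_le) ((edge_le_iff _).mpr (.inr he)),
    isTree_iff_connected_and_ncard_s1.mpr
      ⟨connected_sup_edge_of_connected_withPath h.2.connected, ?_⟩⟩
  rw [edgeSet_sup, edgeSet_edge_of_ne he.ne, Set.union_singleton,
    Set.ncard_insert_of_notMem (notMem_edgeSet_of_le_sdiff_edge hle)]
  rw [Set.ncard_univ, Nat.card_fin] at hcard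
  omega

theorem mem_spanningTrees_of_withPath_compl_singleton [Finite V] (hn : 1 ≤ n) (huv : u ≠ v)
    {k : Fin (n + 1)} (h : withPath u v n S {k}ᶜ ∈ spanningTrees (subdiv G u v n)) :
    S ∈ spanningTrees G := by
  have hcard := ncard_edgeSet_add_of_withPath_mem_spanningTrees hn huv h
  rw [Fin.ncard_compl_singleton] at hcard
  refine ⟨(le_sdiff_edge_of_withPath_le_subdiv hn h.1).trans sdiff_le,
    isTree_iff_connected_and_ncard_s1.mpr
      ⟨connected_of_connected_withPath (k := k) (by simp) h.2.connected, by omega⟩⟩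

variable (G u v n) in
def liftSpanningTree :
    {T ∈ spanningTrees G | s(u, v) ∈ T.edgeSet} ⊕
      Fin (n + 1) × {T ∈ spanningTrees G | s(u, v) ∉ T.edgeSet} → SimpleGraph (V ⊕ Fin n)
  | .inl S => withPath u v n (S.1 \ edge u v) Set.univ
  | .inr (k, S) => withPath u v n S.1 {k}ᶜ

theorem liftSpanningTree_injective (hn : 1 ≤ n) (huv : u ≠ v) :
    Function.Injective (liftSpanningTree G u v n) := by
  rintro (S | ⟨k, S⟩) (S' | ⟨k', S'⟩) h <;>
    obtain ⟨hS, hK⟩ := (withPath_inj hn huv).mp h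
  · have he {T : SimpleGraph V} (hT : s(u, v) ∈ T.edgeSet) : T \ edge u v ⊔ edge u v = T :=
      sdiff_sup_cancel ((edge_le_iff _).mpr (.inr hT))
    exact congrArg _ (Subtype.ext (by rw [← he S.2.2, hS, he S'.2.2]))
  · exact absurd (hK ▸ Set.mem_univ k') (by simp)
  · exact absurd (hK ▸ Set.mem_univ k) (by simp)
  · rw [compl_inj_iff, Set.singleton_eq_singleton_iff] at hK
    rw [Subtype.ext hS, hK]

theorem liftSpanningTree_mem_spanningTrees [Finite V] (hn : 1 ≤ n) (he : G.Adj u v)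
    (x : {T ∈ spanningTrees G | s(u, v) ∈ T.edgeSet} ⊕
      Fin (n + 1) × {T ∈ spanningTrees G | s(u, v) ∉ T.edgeSet}) :
    liftSpanningTree G u v n x ∈ spanningTrees (subdiv G u v n) := by
  rcases x with ⟨S, ⟨hSG, hS⟩, huvS⟩ | ⟨k, ⟨S, ⟨hSG, hS⟩, huvS⟩⟩ <;>
    dsimp only [liftSpanningTree] <;> have hcard := (isTree_iff_connected_and_ncard_s1.mp hS).2
  · refine withPath_mem_spanningTrees hn he.ne (sdiff_le_sdiff_right hSG)
      (connected_withPath_sdiff_edge hn hS.connected) ?_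
    have := Set.ncard_sdiff_singleton_add_one huvS
    rw [edgeSet_sdiff, edgeSet_edge_of_ne he.ne, Set.ncard_univ, Nat.card_fin]
    omega
  · refine withPath_mem_spanningTrees hn he.ne
      (fun a b hab => sdiff_edge_adj.mpr ⟨hSG hab, fun h => huvS (h ▸ hab)⟩)
      (connected_withPath_compl_singleton hn hS.connected k) ?_
    rw [Fin.ncard_compl_singleton]
    omega

theorem mem_range_liftSpanningTree [Finite V] (hn : 1 ≤ n) (he : G.Adj u v)
    {T : SimpleGraph (V ⊕ Fin n)} (hT : T ∈ spanningTrees (subdiv G u v n)) :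
    T ∈ Set.range (liftSpanningTree G u v n) := by
  obtain ⟨S, K, rfl⟩ : ∃ S K, T = withPath u v n S K := ⟨_, _, eq_withPath_of_le_subdiv hn hT.1⟩
  have hle := le_sdiff_edge_of_withPath_le_subdiv hn hT.1
  by_cases hK : K = Set.univ
  · subst hK
    refine ⟨.inl ⟨S ⊔ edge u v, sup_edge_mem_spanningTrees hn he hT,
      .inr ((edge_adj _ _ _ _).mpr ⟨.inl ⟨rfl, rfl⟩, he.ne⟩)⟩, ?_⟩
    simp only [liftSpanningTree]
    rw [(disjoint_sdiff_self_left.mono_left hle).sup_sdiff_cancel_right]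
  · obtain ⟨k, hk⟩ := (Set.ne_univ_iff_exists_notMem K).mp hK
    have hKk : K = {k}ᶜ := by
      ext j
      rw [Set.mem_compl_singleton_iff]
      refine ⟨fun hj hjk => hk (hjk ▸ hj), fun hjk => by_contra fun hj => hjk ?_⟩
      exact subsingleton_compl_of_connected_withPath hT.2.connected hj hk
    subst hKk
    exact ⟨.inr (k, ⟨S, mem_spanningTrees_of_withPath_compl_singleton hn he.ne hT,
      notMem_edgeSet_of_le_sdiff_edge hle⟩), rfl⟩

end Subdivision

theorem subdiv_card_spanningTrees_general {V : Type*} [Fintype V] (G : SimpleGraph V)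
    (u v : V) (he : G.Adj u v) (n : ℕ) (hn : 1 ≤ n) :
    (spanningTrees (subdiv G u v n)).ncard =
      {T ∈ spanningTrees G | s(u, v) ∈ T.edgeSet}.ncard +
        (n + 1) * {T ∈ spanningTrees G | s(u, v) ∉ T.edgeSet}.ncard := by
  have hrange : Set.range (Subdivision.liftSpanningTree G u v n) =
      spanningTrees (subdiv G u v n) :=
    (Set.range_subset_iff.mpr (Subdivision.liftSpanningTree_mem_spanningTrees hn he)).antisymm
      fun _ => Subdivision.mem_range_liftSpanningTree hn he
  rw [← hrange,
    Set.ncard_range_of_injective (Subdivision.liftSpanningTree_injective hn he.ne),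
    Nat.card_sum, Nat.card_prod, Nat.card_fin, Nat.card_coe_set_eq, Nat.card_coe_set_eq]

/-- The total number of spanning trees of `G^n` equals the number of spanning
trees of `G` containing `e`, plus `(n+1)` times the number of spanning trees
of `G` not containing `e`. -/
theorem subdiv_card_spanningTrees {V : Type*} [Fintype V] (G : SimpleGraph V)
    (hG : G.Connected) (u v : V) (he : G.Adj u v) (n : ℕ) (hn : 1 ≤ n) :
    (spanningTrees (subdiv G u v n)).ncard =
      {T ∈ spanningTrees G | s(u, v) ∈ T.edgeSet}.ncard +
        (n + 1) * {T ∈ spanningTrees G | s(u, v) ∉ T.edgeSet}.ncard :=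
  subdiv_card_spanningTrees_general G u v he n hn
end
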